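/- Let β > 0 and let Z, π₁, π₂, q₁, q₂ be positive real numbers. Define r₁ = β·log(π₁/q₁) + β·log Z and r₂ = β·log(π₂/q₂) + β·log Z. Then exp(r₁) / (exp(r₁) + exp(r₂)) = 1 / (1 + exp(β·log(π₂/q₂) − β·log(π₁/q₁))); in particular the partition-function term β·log Z cancels. -/

import Mathlib

open Real

lemma exp_div_exp_add_exp_add_const (a b c : ℝ) :
    exp (a + c) / (exp (a + c) + exp (b + c)) = exp a / (exp a + exp b) := by
  rw [exp_add, exp_add, ← add_mul, mul_div_mul_right _ _ (exp_pos c).ne']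

lemma exp_div_exp_add_exp (a b : ℝ) :
    exp a / (exp a + exp b) = 1 / (1 + exp (b - a)) := by
  rw [exp_sub]
  field_simp

theorem statement_11_general (β Z π₁ π₂ q₁ q₂ : ℝ)
    (r₁ r₂ : ℝ)
    (hr₁ : r₁ = β * Real.log (π₁ / q₁) + β * Real.log Z)
    (hr₂ : r₂ = β * Real.log (π₂ / q₂) + β * Real.log Z) :
    Real.exp r₁ / (Real.exp r₁ + Real.exp r₂) =
      1 / (1 + Real.exp (β * Real.log (π₂ / q₂) - β * Real.log (π₁ / q₁))) := by
  rw [hr₁, hr₂, exp_div_exp_add_exp_add_const, exp_div_exp_add_exp]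

theorem statement_11 (β Z π₁ π₂ q₁ q₂ : ℝ) (hβ : 0 < β) (hZ : 0 < Z)
    (hπ₁ : 0 < π₁) (hπ₂ : 0 < π₂) (hq₁ : 0 < q₁) (hq₂ : 0 < q₂)
    (r₁ r₂ : ℝ)
    (hr₁ : r₁ = β * Real.log (π₁ / q₁) + β * Real.log Z)
    (hr₂ : r₂ = β * Real.log (π₂ / q₂) + β * Real.log Z) :
    Real.exp r₁ / (Real.exp r₁ + Real.exp r₂) =
      1 / (1 + Real.exp (β * Real.log (π₂ / q₂) - β * Real.log (π₁ / q₁))) :=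
  statement_11_general β Z π₁ π₂ q₁ q₂ r₁ r₂ hr₁ hr₂
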